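/- Let d' = ⌊d/2⌋, B = T(m,d') and A = T(m,d), and suppose h_α = Σ_{k=1}^r c_k z_k^α for all α ∈ 2A with c_k ≠ 0 and z_1,...,z_r ∈ C^m B-independent. Then the minimal rank over all completions of the quasi-Hankel matrix H_A(h) (with entries indexed by A fixed, entries indexed by 2A \ A free) equals r, and is attained by the canonical completion h_α = Σ_k c_k z_k^α. -/

import Mathlib

open Matrix

/-- Index set for `T(m,d) = {α ∈ ℕ^m : |α| ≤ d}`, encoded with bounded entries. -/
def TIdx (m d : ℕ) := {v : Fin m → Fin (d + 1) // ∑ i, (v i : ℕ) ≤ d}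

instance (m d : ℕ) : Fintype (TIdx m d) := Subtype.fintype _
instance (m d : ℕ) : DecidableEq (TIdx m d) := Subtype.instDecidableEq

/-- Quasi-Hankel matrix `[f_{αᵢ+αⱼ}]` indexed by `T(m,d)`. -/
noncomputable def quasiHankel (m d : ℕ) (f : (Fin m → ℕ) → ℂ) :
    Matrix (TIdx m d) (TIdx m d) ℂ :=
  Matrix.of fun a b => f (fun i => (a.1 i : ℕ) + (b.1 i : ℕ))

/-!
With `B = T(m, ⌊d/2⌋) ⊆ A = T(m, d)` we have `B + B ⊆ A`, so `H_B(h)` is a principal submatrix of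
every completion of `H_A(h)`. The Vandermonde factorization `H_B(h) = V_B diag(c) V_Bᵀ`, with
`V_B` of full column rank and `c` nowhere zero, gives `rank H_B(h) = r`; this bounds the rank of
every completion from below. The same factorization for `A` shows that the canonical completion
has rank at most `r`.
-/

namespace Matrix

variable {K : Type*} [Field K] {m n o : Type*} [Fintype n] [Fintype o]

theorem mulVecLin_injective_of_rank_eq_card_width {A : Matrix m n K}
    (hA : A.rank = Fintype.card n) : Function.Injective A.mulVecLin := by
  rw [← LinearMap.ker_eq_bot, ← Submodule.finrank_eq_zero]
  have := A.mulVecLin.finrank_range_add_finrank_ker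
  rw [← Matrix.rank, hA, Module.finrank_fintype_fun_eq_card] at this
  omega

theorem rank_mul_eq_right_of_rank_eq_card_width {A : Matrix m n K}
    (hA : A.rank = Fintype.card n) (B : Matrix n o K) : (A * B).rank = B.rank := by
  rw [rank, rank, mulVecLin_mul, LinearMap.range_comp]
  exact (LinearEquiv.finrank_eq (Submodule.equivMapOfInjective _
    (mulVecLin_injective_of_rank_eq_card_width hA) _)).symm

theorem rank_mul_diagonal_mul_transpose [Fintype m] [DecidableEq n] {V : Matrix m n K}
    (hV : V.rank = Fintype.card n) {c : n → K} (hc : ∀ k, c k ≠ 0) :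
    (V * (diagonal c * Vᵀ)).rank = Fintype.card n := by
  have hdet : IsUnit (diagonal c).det := by
    rw [det_diagonal, isUnit_iff_ne_zero]
    exact Finset.prod_ne_zero_iff.mpr fun k _ => hc k
  rw [rank_mul_eq_right_of_rank_eq_card_width hV, rank_mul_eq_right_of_isUnit_det _ _ hdet,
    rank_transpose, hV]

end Matrix

def TIdx.castLE {m d' d : ℕ} (h : d' ≤ d) (a : TIdx m d') : TIdx m d :=
  ⟨fun i => Fin.castLE (Nat.succ_le_succ h) (a.1 i), a.2.trans h⟩

noncomputable def quasiVandermonde {ι : Type*} (m d : ℕ) (z : ι → Fin m → ℂ) :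
    Matrix (TIdx m d) ι ℂ :=
  Matrix.of fun a k => ∏ i, z k i ^ (a.1 i : ℕ)

section QuasiHankel

variable {m d : ℕ}

theorem quasiHankel_submatrix_castLE {d' : ℕ} (h : d' ≤ d) (f : (Fin m → ℕ) → ℂ) :
    (quasiHankel m d f).submatrix (TIdx.castLE h) (TIdx.castLE h) = quasiHankel m d' f :=
  rfl

theorem quasiHankel_congr {f g : (Fin m → ℕ) → ℂ}
    (hfg : ∀ a : Fin m → ℕ, ∑ i, a i ≤ 2 * d → f a = g a) :
    quasiHankel m d f = quasiHankel m d g := by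
  ext a b
  refine hfg _ ?_
  rw [Finset.sum_add_distrib]
  linarith [a.2, b.2]

theorem quasiHankel_eq_quasiVandermonde_mul {ι : Type*} [Fintype ι] [DecidableEq ι]
    (z : ι → Fin m → ℂ) (c : ι → ℂ) {H : (Fin m → ℕ) → ℂ}
    (hH : ∀ a : Fin m → ℕ, H a = ∑ k, c k * ∏ i, z k i ^ a i) :
    quasiHankel m d H =
      quasiVandermonde m d z * (diagonal c * (quasiVandermonde m d z)ᵀ) := by
  ext a b
  simp only [quasiHankel, quasiVandermonde, of_apply, mul_apply, transpose_apply,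
    diagonal_apply, ite_mul, zero_mul, Finset.sum_ite_eq, Finset.mem_univ, if_true, hH, pow_add,
    Finset.prod_mul_distrib]
  exact Finset.sum_congr rfl fun k _ => by ring

end QuasiHankel

/-- Quasi-Hankel low-rank completion: with `B = T(m,⌊d/2⌋)`, `A = T(m,d)`,
`h_α = ∑ₖ cₖ zₖ^α` with all `cₖ ≠ 0` and `z₁,…,z_r` `B`-independent, the minimal rank
over all completions of `H_A(h)` (entries indexed by `A` fixed, the rest free)
equals `r`, attained by the canonical completion `h_α = ∑ₖ cₖ zₖ^α`. -/
theorem quasiHankel_minimal_rank_completion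
    (m d r : ℕ) (z : Fin r → Fin m → ℂ) (c : Fin r → ℂ) (hc : ∀ k, c k ≠ 0)
    (H : (Fin m → ℕ) → ℂ)
    (hH : ∀ a : Fin m → ℕ, H a = ∑ k, c k * ∏ i, z k i ^ a i)
    (VB : Matrix (TIdx m (d / 2)) (Fin r) ℂ)
    (hVB : VB = Matrix.of fun a k => ∏ i, z k i ^ (a.1 i : ℕ))
    (hBindep : VB.rank = r) :
    (quasiHankel m d H).rank = r ∧
      ∀ g : (Fin m → ℕ) → ℂ, (∀ a : Fin m → ℕ, ∑ i, a i ≤ d → g a = H a) →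
        r ≤ (quasiHankel m d g).rank := by
  subst hVB
  have hV : (quasiVandermonde m (d / 2) z).rank = Fintype.card (Fin r) :=
    hBindep.trans (Fintype.card_fin r).symm
  have hlower : ∀ g : (Fin m → ℕ) → ℂ, (∀ a : Fin m → ℕ, ∑ i, a i ≤ d → g a = H a) →
      r ≤ (quasiHankel m d g).rank := fun g hg => calc
    r = (quasiHankel m (d / 2) H).rank := by
      rw [quasiHankel_eq_quasiVandermonde_mul z c hH, rank_mul_diagonal_mul_transpose hV hc,
        Fintype.card_fin]
    _ = (quasiHankel m (d / 2) g).rank := by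
      rw [quasiHankel_congr fun a ha => hg a (ha.trans (Nat.mul_div_le d 2))]
    _ ≤ (quasiHankel m d g).rank := by
      rw [← quasiHankel_submatrix_castLE (Nat.div_le_self d 2)]
      exact rank_submatrix_le _ _ _
  refine ⟨le_antisymm ?_ (hlower H fun _ _ => rfl), hlower⟩
  rw [quasiHankel_eq_quasiVandermonde_mul z c hH]
  exact (rank_mul_le_left _ _).trans ((rank_le_card_width _).trans_eq (Fintype.card_fin r))
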